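/- For every n ≥ 0, the 2^n-fold running sum (mod 2) of the Thue-Morse sequence t equals g_n(h^ω(0)), where h is the Thue-Morse morphism h(0)=01, h(1)=10, and g_n is the 2^{n+2}-uniform morphism defined by g_n(x) = h^n(x) 1^{2^n} h^n(x) 0^{2^n} for x ∈ {0,1}. -/

import Mathlib

/-- The Thue–Morse sequence: parity of the number of 1s in the binary representation. -/
def t (k : ℕ) : ℕ := (Nat.digits 2 k).sum % 2

/-- `ts m` is the m-fold iterated running sum (mod 2) of the Thue–Morse sequence. -/
def ts : ℕ → ℕ → ℕ
  | 0, k => t k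
  | m + 1, k => (∑ j ∈ Finset.range (k + 1), ts m j) % 2

/-- The Thue–Morse morphism h, with h(0) = 01 and h(1) = 10. -/
def h (a : ℕ) : List ℕ := if a = 0 then [0, 1] else [1, 0]

/-- `hIter n x` is `h^n(x)` for a letter `x`. -/
def hIter (n : ℕ) (x : ℕ) : List ℕ := (fun w => w.flatMap h)^[n] [x]

/-- The 2^{n+2}-uniform morphism g_n with g_n(x) = h^n(x) 1^{2^n} h^n(x) 0^{2^n}. -/
def gMor (n : ℕ) (x : ℕ) : List ℕ :=
  hIter n x ++ List.replicate (2 ^ n) 1 ++ hIter n x ++ List.replicate (2 ^ n) 0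

/-! Over `ZMod 2` one has `(1 - X) ^ 2 ^ n = 1 - X ^ 2 ^ n`, so the `2^n`-fold running sum `s` of
`t` is the unique sequence with `s k = t k` for `k < 2^n` and `s (k + 2^n) = s k + t (k + 2^n)`.
Write `k = q * 2^(n+2) + c * 2^n + a` with `c < 4` and `a < 2^n`. Since `h^n(x)` is the prefix
of length `2^n` of `t`, complemented when `x = 1`, the `k`-th letter of `g_n(t)` is `t q + t a`,
`1`, `t q + t a`, `0` for `c = 0, 1, 2, 3`; by `t (q * 2^j + r) = t q + t r` for `r < 2^j`, these
letters satisfy the same recursion. -/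

lemma t_lt_two (k : ℕ) : t k < 2 := Nat.mod_lt _ two_pos

lemma t_two_mul_add (i : ℕ) {b : ℕ} (hb : b < 2) : t (2 * i + b) = (t i + b) % 2 := by
  rcases Nat.eq_zero_or_pos (2 * i + b) with h0 | hpos
  · obtain ⟨rfl, rfl⟩ : i = 0 ∧ b = 0 := by omega
    rfl
  unfold t
  rw [add_comm, Nat.digits_add 2 one_lt_two b i hb (by omega), List.sum_cons]
  omega

lemma natCast_t_two_mul_add (i : ℕ) {b : ℕ} (hb : b < 2) :
    (t (2 * i + b) : ZMod 2) = t i + b := by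
  rw [t_two_mul_add i hb, ZMod.natCast_mod, Nat.cast_add]

lemma natCast_t_mul_two_pow_add (q : ℕ) :
    ∀ {j r : ℕ}, r < 2 ^ j → (t (q * 2 ^ j + r) : ZMod 2) = t q + t r
  | 0, r, hr => by
    obtain rfl : r = 0 := by simpa using hr
    simp [t]
  | j + 1, r, hr => by
    obtain ⟨s, b, hb, rfl⟩ : ∃ s b, b < 2 ∧ r = 2 * s + b :=
      ⟨r / 2, r % 2, Nat.mod_lt _ two_pos, (Nat.div_add_mod r 2).symm⟩
    have hs : s < 2 ^ j := by rw [pow_succ] at hr; omega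
    rw [show q * 2 ^ (j + 1) + (2 * s + b) = 2 * (q * 2 ^ j + s) + b by ring,
      natCast_t_two_mul_add _ hb, natCast_t_two_mul_add _ hb, natCast_t_mul_two_pow_add q hs,
      add_assoc]

def runningSum {M : Type*} [AddCommMonoid M] (u : ℕ → M) (k : ℕ) : M :=
  ∑ j ∈ Finset.range (k + 1), u j

section CharTwo

variable {R : Type*} [CommRing R] [CharP R 2]

lemma iterate_runningSum_two_pow_add (n : ℕ) (u : ℕ → R) (k : ℕ) :
    (runningSum^[2 ^ n] u) (k + 2 ^ n) = (runningSum^[2 ^ n] u) k + u (k + 2 ^ n) := by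
  induction n generalizing u k with
  | zero => simp [runningSum, Finset.sum_range_succ _ (k + 1)]
  | succ n ih =>
    rw [pow_succ, mul_two, Function.iterate_add_apply, ← add_assoc, ih, ih, ih u (k + 2 ^ n)]
    linear_combination (runningSum^[2 ^ n] u) (k + 2 ^ n) * CharTwo.two_eq_zero (R := R)

lemma iterate_runningSum_two_pow_of_lt (n : ℕ) (u : ℕ → R) {k : ℕ} (hk : k < 2 ^ n) :
    (runningSum^[2 ^ n] u) k = u k := by
  induction n generalizing u k with
  | zero =>
    obtain rfl : k = 0 := by simpa using hk
    simp [runningSum]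
  | succ n ih =>
    rw [pow_succ, mul_two, Function.iterate_add_apply]
    rcases lt_or_ge k (2 ^ n) with hk' | hk'
    · rw [ih _ hk', ih _ hk']
    · obtain ⟨a, rfl⟩ : ∃ a, k = a + 2 ^ n := ⟨k - 2 ^ n, by omega⟩
      have ha : a < 2 ^ n := by rw [pow_succ] at hk; omega
      rw [iterate_runningSum_two_pow_add, ih _ ha, iterate_runningSum_two_pow_add, ← add_assoc,
        CharTwo.add_self_eq_zero, zero_add]

lemma iterate_runningSum_two_pow_eq {n : ℕ} {u f : ℕ → R} (hlow : ∀ k < 2 ^ n, f k = u k)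
    (hstep : ∀ k, f (k + 2 ^ n) = f k + u (k + 2 ^ n)) : runningSum^[2 ^ n] u = f := by
  funext k
  induction k using Nat.strong_induction_on with
  | _ k ih =>
    rcases lt_or_ge k (2 ^ n) with hk | hk
    · rw [iterate_runningSum_two_pow_of_lt n u hk, hlow k hk]
    · obtain ⟨a, rfl⟩ : ∃ a, k = a + 2 ^ n := ⟨k - 2 ^ n, by omega⟩
      rw [iterate_runningSum_two_pow_add, hstep, ih a (by simp)]

end CharTwo

lemma ts_lt_two : ∀ m k : ℕ, ts m k < 2
  | 0, k => t_lt_two k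
  | _ + 1, _ => Nat.mod_lt _ two_pos

lemma natCast_ts : ∀ m k : ℕ, (ts m k : ZMod 2) = (runningSum^[m] fun i => (t i : ZMod 2)) k
  | 0, _ => rfl
  | m + 1, k => by
    rw [Function.iterate_succ_apply', ts, ZMod.natCast_mod, Nat.cast_sum, runningSum]
    exact Finset.sum_congr rfl fun j _ => natCast_ts m j

lemma List.map_range_two_mul_eq_flatMap {α : Type*} (m : ℕ) (f : ℕ → α) :
    (List.range (2 * m)).map f = (List.range m).flatMap fun i => [f (2 * i), f (2 * i + 1)] := by
  induction m with
  | zero => simp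
  | succ m ih =>
    rw [show 2 * (m + 1) = 2 * m + 1 + 1 by ring, List.range_succ, List.range_succ,
      List.range_succ, List.map_append, List.map_append, List.flatMap_append, ← ih]
    simp

lemma List.getD_flatten_mul_add {α : Type*} {N : ℕ} (L : List (List α))
    (hL : ∀ l ∈ L, l.length = N) (d : α) {c a : ℕ} (hc : c < L.length) (ha : a < N) :
    L.flatten.getD (c * N + a) d = L[c].getD a d := by
  induction L generalizing c with
  | nil => simp at hc
  | cons l L ih =>
    have hl : l.length = N := hL l (by simp)
    rw [List.flatten_cons]
    cases c with
    | zero => simpa using List.getD_append _ _ _ _ (hl ▸ ha)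
    | succ c =>
      rw [List.getD_append_right _ _ _ _ (by rw [hl]; nlinarith), hl,
        show (c + 1) * N + a - N = c * N + a by rw [add_mul, one_mul]; omega,
        ih (fun l' hl' => hL l' (by simp [hl'])) (by simpa using hc)]
      rfl

lemma hIter_eq_map {x : ℕ} (hx : x < 2) (n : ℕ) :
    hIter n x = (List.range (2 ^ n)).map fun i => (x + t i) % 2 := by
  induction n with
  | zero => simp [hIter, Nat.mod_eq_of_lt hx, t]
  | succ n ih =>
    rw [hIter, Function.iterate_succ_apply', ← hIter, ih, List.flatMap_map, pow_succ',
      List.map_range_two_mul_eq_flatMap]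
    refine List.flatMap_congr fun i _ => ?_
    have hti := t_lt_two i
    have ht2i : t (2 * i) = t i := by
      simpa [Nat.mod_eq_of_lt hti] using t_two_mul_add i two_pos
    rw [ht2i, t_two_mul_add i one_lt_two]
    unfold h
    split_ifs <;> simp <;> omega

lemma gMor_getD {n x c a : ℕ} (hx : x < 2) (hc : c < 4) (ha : a < 2 ^ n) :
    (gMor n x).getD (c * 2 ^ n + a) 0 =
      if c = 1 then 1 else if c = 3 then 0 else (x + t a) % 2 := by
  have hblocks : gMor n x =
      [hIter n x, List.replicate (2 ^ n) 1, hIter n x, List.replicate (2 ^ n) 0].flatten := by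
    simp [gMor]
  have hlen : (hIter n x).length = 2 ^ n := by simp [hIter_eq_map hx]
  rw [hblocks, List.getD_flatten_mul_add _ (by simp [hlen]) _ (by simpa using hc) ha]
  interval_cases c <;> simp [hIter_eq_map hx, ha]

def gMorOfT (n k : ℕ) : ℕ := (gMor n (t (k / 2 ^ (n + 2)))).getD (k % 2 ^ (n + 2)) 0

lemma gMorOfT_mul_add (n q : ℕ) {r : ℕ} (hr : r < 2 ^ (n + 2)) :
    gMorOfT n (q * 2 ^ (n + 2) + r) = (gMor n (t q)).getD r 0 := by
  rw [gMorOfT, mul_comm, Nat.mul_add_div (Nat.two_pow_pos _), Nat.mul_add_mod,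
    Nat.div_eq_of_lt hr, Nat.mod_eq_of_lt hr, add_zero]

lemma exists_eq_mul_add_mul_add (n k : ℕ) :
    ∃ q c a, c < 4 ∧ a < 2 ^ n ∧ k = q * 2 ^ (n + 2) + (c * 2 ^ n + a) := by
  refine ⟨k / 2 ^ n / 4, k / 2 ^ n % 4, k % 2 ^ n, Nat.mod_lt _ four_pos,
    Nat.mod_lt _ (Nat.two_pow_pos n), ?_⟩
  calc k = (k / 2 ^ n / 4 * 4 + k / 2 ^ n % 4) * 2 ^ n + k % 2 ^ n := by
        rw [Nat.div_add_mod', Nat.div_add_mod']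
    _ = _ := by ring

lemma mul_two_pow_add_lt_two_pow_add_two {n c a : ℕ} (hc : c < 4) (ha : a < 2 ^ n) :
    c * 2 ^ n + a < 2 ^ (n + 2) := by
  rw [pow_add]; nlinarith

lemma gMorOfT_lt_two (n k : ℕ) : gMorOfT n k < 2 := by
  obtain ⟨q, c, a, hc, ha, rfl⟩ := exists_eq_mul_add_mul_add n k
  rw [gMorOfT_mul_add n q (mul_two_pow_add_lt_two_pow_add_two hc ha),
    gMor_getD (t_lt_two q) hc ha]
  split_ifs <;> omega

lemma natCast_gMorOfT_mul_add_mul_add (n q : ℕ) {c a : ℕ} (hc : c < 4) (ha : a < 2 ^ n) :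
    (gMorOfT n (q * 2 ^ (n + 2) + (c * 2 ^ n + a)) : ZMod 2) =
      if c = 1 then 1 else if c = 3 then 0 else (t q : ZMod 2) + t a := by
  rw [gMorOfT_mul_add n q (mul_two_pow_add_lt_two_pow_add_two hc ha),
    gMor_getD (t_lt_two q) hc ha]
  split_ifs <;> simp [ZMod.natCast_mod]

lemma natCast_gMorOfT_of_lt {n k : ℕ} (hk : k < 2 ^ n) : (gMorOfT n k : ZMod 2) = t k := by
  simpa [t] using natCast_gMorOfT_mul_add_mul_add n 0 four_pos hk

lemma natCast_gMorOfT_add_two_pow (n k : ℕ) :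
    (gMorOfT n (k + 2 ^ n) : ZMod 2) = gMorOfT n k + t (k + 2 ^ n) := by
  obtain ⟨q, c, a, hc, ha, rfl⟩ := exists_eq_mul_add_mul_add n k
  rw [natCast_gMorOfT_mul_add_mul_add n q hc ha]
  rcases (by omega : c < 3 ∨ c = 3) with hc3 | rfl
  · rw [show q * 2 ^ (n + 2) + (c * 2 ^ n + a) + 2 ^ n = q * 2 ^ (n + 2) + ((c + 1) * 2 ^ n + a)
        by ring,
      natCast_gMorOfT_mul_add_mul_add n q (by omega) ha,
      natCast_t_mul_two_pow_add _ (mul_two_pow_add_lt_two_pow_add_two (by omega) ha),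
      natCast_t_mul_two_pow_add _ ha]
    have ht1 : (t 1 : ZMod 2) = 1 := by simp [t]
    have ht2 : (t 2 : ZMod 2) = 1 := by simp [t]
    have ht3 : (t 3 : ZMod 2) = 0 := by simp [t]
    interval_cases c <;> simp only [ht1, ht2, ht3] <;> grind
  · rw [show q * 2 ^ (n + 2) + (3 * 2 ^ n + a) + 2 ^ n = (q + 1) * 2 ^ (n + 2) + (0 * 2 ^ n + a)
        by ring,
      natCast_gMorOfT_mul_add_mul_add n _ four_pos ha,
      natCast_t_mul_two_pow_add _ (mul_two_pow_add_lt_two_pow_add_two four_pos ha),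
      natCast_t_mul_two_pow_add _ ha]
    simp [show t 0 = 0 from rfl]

/-- `ts (2^n)` equals `g_n` applied to the fixed point `h^ω(0)` (which is the
Thue–Morse sequence `t`): the k-th letter of `g_n(h^ω(0))` is the
`k mod 2^{n+2}`-th letter of the image of the `⌊k/2^{n+2}⌋`-th letter. -/
theorem tm_sum_as_morphism (n k : ℕ) :
    ts (2 ^ n) k = (gMor n (t (k / 2 ^ (n + 2)))).getD (k % 2 ^ (n + 2)) 0 := by
  have hsum : (runningSum^[2 ^ n] fun i => (t i : ZMod 2)) = fun k => (gMorOfT n k : ZMod 2) :=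
    iterate_runningSum_two_pow_eq (fun _ => natCast_gMorOfT_of_lt) (natCast_gMorOfT_add_two_pow n)
  have hcast : (ts (2 ^ n) k : ZMod 2) = gMorOfT n k := by rw [natCast_ts, hsum]
  rwa [ZMod.natCast_eq_natCast_iff', Nat.mod_eq_of_lt (ts_lt_two _ _),
    Nat.mod_eq_of_lt (gMorOfT_lt_two n k)] at hcast
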